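/- Let w₀, …, w_K be nonnegative real numbers, X₀, …, X_K ∈ ℝⁿ, Y₀, …, Y_K ∈ ℝᵐ, let Q be a real symmetric positive semidefinite n×n matrix and R a real symmetric positive definite m×m matrix. Define Pᵇ = ∑ᵢ wᵢ Xᵢ Xᵢᵀ + Q, P_xy = ∑ᵢ wᵢ Xᵢ Yᵢᵀ, P_yy = ∑ᵢ wᵢ Yᵢ Yᵢᵀ + R, and K = P_xy P_yy^{-1}. Then the analysis covariance Pᵃ = Pᵇ − K (P_xy)ᵀ is symmetric positive semidefinite. -/

import Mathlib

open Matrix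
open scoped ComplexOrder

/-!
The analysis covariance is the Schur complement of `P_yy` in the joint covariance
`[[Pᵇ, P_xy], [P_xyᵀ, P_yy]]` of the stacked deviations `(Xᵢ, Yᵢ)`. That block matrix is a
nonnegative combination of outer products `(Xᵢ, Yᵢ)(Xᵢ, Yᵢ)ᵀ` plus `diag(Q, R)`, hence positive
semidefinite, and `P_yy ≥ R > 0` is positive definite, so its Schur complement is positive
semidefinite.
-/

namespace Matrix

variable {ι m n 𝕜 : Type*} [Fintype ι] [RCLike 𝕜]

theorem posSemidef_sum_smul_vecMulVec_self_star [Fintype n] {w : ι → ℝ} (hw : ∀ i, 0 ≤ w i)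
    (z : ι → n → 𝕜) : (∑ i, w i • vecMulVec (z i) (star (z i))).PosSemidef :=
  posSemidef_sum _ fun i _ => (posSemidef_vecMulVec_self_star (z i)).smul (hw i)

theorem PosSemidef.fromBlocks_zero [Fintype m] [Fintype n] {A : Matrix m m 𝕜} {D : Matrix n n 𝕜}
    (hA : A.PosSemidef) (hD : D.PosSemidef) : (fromBlocks A 0 0 D).PosSemidef := by
  refine .of_dotProduct_mulVec_nonneg (hA.isHermitian.fromBlocks (by simp) hD.isHermitian)
    fun x => ?_
  obtain ⟨u, v, rfl⟩ : ∃ u v, x = Sum.elim u v := ⟨_, _, (Sum.elim_comp_inl_inr x).symm⟩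
  simpa only [fromBlocks_mulVec, Sum.elim_comp_inl, Sum.elim_comp_inr, zero_mulVec, add_zero,
    zero_add, Function.star_sumElim, sumElim_dotProduct_sumElim] using
    add_nonneg (hA.dotProduct_mulVec_nonneg u) (hD.dotProduct_mulVec_nonneg v)

theorem fromBlocks_add_sum_smul_vecMulVec {w : ι → ℝ} (x : ι → m → 𝕜) (y : ι → n → 𝕜)
    (A : Matrix m m 𝕜) (D : Matrix n n 𝕜) :
    fromBlocks (∑ i, w i • vecMulVec (x i) (star (x i)) + A)
        (∑ i, w i • vecMulVec (x i) (star (y i)))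
        (∑ i, w i • vecMulVec (x i) (star (y i)))ᴴ
        (∑ i, w i • vecMulVec (y i) (star (y i)) + D) =
      ∑ i, w i • vecMulVec (Sum.elim (x i) (y i)) (star (Sum.elim (x i) (y i))) +
        fromBlocks A 0 0 D := by
  ext (j | j) (k | k) <;> simp [sum_apply, vecMulVec_apply, conjTranspose_apply, mul_comm]

end Matrix

/-- In the UKF analysis step, the updated covariance
`Pᵃ = Pᵇ − K (P_xy)ᵀ` with `K = P_xy P_yy⁻¹` is symmetric positive
semidefinite. -/
theorem ukf_analysis_covariance_posSemidef
    (m n K : ℕ) (w : Fin (K + 1) → ℝ) (hw : ∀ i, 0 ≤ w i)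
    (X : Fin (K + 1) → (Fin n → ℝ)) (Y : Fin (K + 1) → (Fin m → ℝ))
    (Q : Matrix (Fin n) (Fin n) ℝ) (hQ : Q.PosSemidef)
    (R : Matrix (Fin m) (Fin m) ℝ) (hR : R.PosDef) :
    let Pb : Matrix (Fin n) (Fin n) ℝ :=
      (∑ i : Fin (K + 1), w i • Matrix.vecMulVec (X i) (X i)) + Q
    let Pxy : Matrix (Fin n) (Fin m) ℝ :=
      ∑ i : Fin (K + 1), w i • Matrix.vecMulVec (X i) (Y i)
    let Pyy : Matrix (Fin m) (Fin m) ℝ :=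
      (∑ i : Fin (K + 1), w i • Matrix.vecMulVec (Y i) (Y i)) + R
    let Kg : Matrix (Fin n) (Fin m) ℝ := Pxy * Pyy⁻¹
    (Pb - Kg * Pxy.transpose).PosSemidef := by
  intro Pb Pxy Pyy Kg
  have hPyy : Pyy.PosDef := by
    simpa only [star_trivial] using
      PosDef.posSemidef_add (posSemidef_sum_smul_vecMulVec_self_star hw Y) hR
  have : Invertible Pyy := hPyy.isUnit.invertible
  have hjoint : (fromBlocks Pb Pxy Pxyᴴ Pyy).PosSemidef := by
    have h := (posSemidef_sum_smul_vecMulVec_self_star hw fun i => Sum.elim (X i) (Y i)).add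
      (hQ.fromBlocks_zero hR.posSemidef)
    rw [← fromBlocks_add_sum_smul_vecMulVec] at h
    simpa only [star_trivial] using h
  simpa only [conjTranspose_eq_transpose_of_trivial] using
    (PosDef.fromBlocks₂₂ Pb Pxy hPyy).mp hjoint
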